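/- Let ψ_n and ψ'_n be distributions on the finite state space of a Markov chain evolving under the same transition kernel r, i.e., p_{n+1}(y) = ∑_x p_n(x) r(y|x) and s_{n+1}(y) = ∑_x s_n(x) r(y|x), with all probabilities positive, and q ≠ 1. Then D_q(ψ_n || ψ'_n) ≥ D_q(ψ_{n+1} || ψ'_{n+1}) + (1-q)·∑_{x_n, x_{n+1}} p(x_{n+1}, x_n)·ln_q(p(x_{n+1})/s(x_{n+1}))·ln_q(p(x_n|x_{n+1})/s(x_n|x_{n+1})), for q ≤ 2. -/

import Mathlib

noncomputable def lnq (q t : ℝ) : ℝ := (t ^ (1 - q) - 1) / (1 - q)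

/-!
Write `π(x, y) = p(x) r(x, y)` and `σ(x, y) = s(x) r(x, y)` for the joint laws of two consecutive
states. Since both share the kernel `r`, `π / σ = p / s`, so `D_q(π ‖ σ) = D_q(p ‖ s)`. Factoring
the joint laws the other way round, through the law of the later state and the backward
conditionals, the pseudo-additivity `ln_q (a b) = ln_q a + ln_q b + (1 - q) ln_q a ln_q b` splits
`D_q(π ‖ σ)` into the divergence of the later marginals, the averaged divergence of the backward
conditionals, and the `(1 - q)` cross term. For `q ≤ 2` one has `ln_q t ≥ 1 - 1/t`, which makes
every `D_q` between distributions nonnegative, so the conditional term can be dropped.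
-/

open Finset

section

variable {ι α β : Type*} [Fintype ι] [Fintype α] [Fintype β]

noncomputable def qRelEntropy (q : ℝ) (p s : ι → ℝ) : ℝ :=
  ∑ x, p x * lnq q (p x / s x)

lemma lnq_mul {q : ℝ} (hq : q ≠ 1) {a b : ℝ} (ha : 0 ≤ a) (hb : 0 ≤ b) :
    lnq q (a * b) = lnq q a + lnq q b + (1 - q) * lnq q a * lnq q b := by
  have : (1 : ℝ) - q ≠ 0 := sub_ne_zero.mpr hq.symm
  unfold lnq
  rw [Real.mul_rpow ha hb]
  field_simp
  ring

lemma one_sub_inv_le_lnq {q : ℝ} (hq2 : q ≤ 2) (hq1 : q ≠ 1) {t : ℝ} (ht : 0 < t) :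
    1 - t⁻¹ ≤ lnq q t := by
  unfold lnq
  rcases hq1.lt_or_gt with hq | hq
  · have hexp : 1 + Real.log t * (1 - q) ≤ t ^ (1 - q) := by
      rw [Real.rpow_def_of_pos ht]
      linarith [Real.add_one_le_exp (Real.log t * (1 - q))]
    rw [le_div_iff₀ (by linarith)]
    nlinarith [Real.one_sub_inv_le_log_of_pos ht]
  · -- Bernoulli's inequality for the exponent `q - 1 ∈ (0, 1]`, applied at `t⁻¹`
    have hbern : t ^ (1 - q) ≤ 1 + (q - 1) * (t⁻¹ - 1) := by
      rw [show 1 - q = -(q - 1) by ring, Real.rpow_neg ht.le, ← Real.inv_rpow ht.le]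
      simpa using rpow_one_add_le_one_add_mul_self (s := t⁻¹ - 1)
        (by linarith [inv_pos.mpr ht]) (p := q - 1) (by linarith) (by linarith)
    rw [le_div_iff_of_neg (by linarith)]
    linarith

lemma qRelEntropy_nonneg {q : ℝ} (hq2 : q ≤ 2) (hq1 : q ≠ 1) {p s : ι → ℝ}
    (hp : ∀ x, 0 < p x) (hs : ∀ x, 0 < s x) (hsum : ∑ x, s x ≤ ∑ x, p x) :
    0 ≤ qRelEntropy q p s := by
  have hterm : ∀ x, p x - s x ≤ p x * lnq q (p x / s x) := fun x => by
    calc p x - s x = p x * (1 - (p x / s x)⁻¹) := by field_simp [(hp x).ne']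
      _ ≤ p x * lnq q (p x / s x) :=
        mul_le_mul_of_nonneg_left (one_sub_inv_le_lnq hq2 hq1 (div_pos (hp x) (hs x))) (hp x).le
  calc (0 : ℝ) ≤ ∑ x, (p x - s x) := by rw [sum_sub_distrib]; linarith
    _ ≤ qRelEntropy q p s := sum_le_sum fun x _ => hterm x

lemma qRelEntropy_mul_kernel {q : ℝ} (p s : α → ℝ) {r : α → β → ℝ} (hr : ∀ x, ∑ y, r x y = 1) :
    qRelEntropy q (fun z : α × β => p z.1 * r z.1 z.2) (fun z => s z.1 * r z.1 z.2) =
      qRelEntropy q p s := by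
  have hterm : ∀ x y, p x * r x y * lnq q (p x * r x y / (s x * r x y)) =
      r x y * (p x * lnq q (p x / s x)) := fun x y => by
    rcases eq_or_ne (r x y) 0 with h | h
    · simp [h]
    · rw [mul_div_mul_right _ _ h]; ring
  simp only [qRelEntropy, Fintype.sum_prod_type, hterm, ← sum_mul, hr, one_mul]

lemma qRelEntropy_eq_marginal_add_conditional {q : ℝ} (hq : q ≠ 1) {π σ : α × β → ℝ}
    (hπ : ∀ z, 0 < π z) (hσ : ∀ z, 0 < σ z) :
    qRelEntropy q π σ =
      qRelEntropy q (fun y => ∑ x, π (x, y)) (fun y => ∑ x, σ (x, y)) +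
      ∑ y, (∑ x, π (x, y)) * qRelEntropy q (fun x => π (x, y) / ∑ x', π (x', y))
        (fun x => σ (x, y) / ∑ x', σ (x', y)) +
      (1 - q) * ∑ x, ∑ y, π (x, y) * lnq q ((∑ x', π (x', y)) / ∑ x', σ (x', y)) *
        lnq q ((π (x, y) / ∑ x', π (x', y)) / (σ (x, y) / ∑ x', σ (x', y))) := by
  set P : β → ℝ := fun y => ∑ x, π (x, y)
  set S : β → ℝ := fun y => ∑ x, σ (x, y)
  have marginal_pos : ∀ {f : α × β → ℝ}, (∀ z, 0 < f z) → ∀ x y, 0 < ∑ x', f (x', y) :=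
    fun hf x y => (hf (x, y)).trans_le (single_le_sum (fun x' _ => (hf (x', y)).le) (mem_univ x))
  have hmarginal : qRelEntropy q P S = ∑ x, ∑ y, π (x, y) * lnq q (P y / S y) := by
    simp only [qRelEntropy, P, sum_mul]
    exact sum_comm
  have hconditional : ∑ y, P y * qRelEntropy q (fun x => π (x, y) / P y) (fun x => σ (x, y) / S y) =
      ∑ x, ∑ y, π (x, y) * lnq q ((π (x, y) / P y) / (σ (x, y) / S y)) := by
    simp only [qRelEntropy, mul_sum]
    rw [sum_comm]
    refine sum_congr rfl fun x _ => sum_congr rfl fun y _ => ?_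
    rw [← mul_assoc, mul_div_cancel₀ _ (marginal_pos hπ x y).ne']
  have hterm : ∀ x y, π (x, y) * lnq q (π (x, y) / σ (x, y)) =
      π (x, y) * lnq q (P y / S y) + π (x, y) * lnq q ((π (x, y) / P y) / (σ (x, y) / S y)) +
      (1 - q) * (π (x, y) * lnq q (P y / S y) * lnq q ((π (x, y) / P y) / (σ (x, y) / S y))) :=
    fun x y => by
    have hP : 0 < P y := marginal_pos hπ x y
    have hS : 0 < S y := marginal_pos hσ x y
    have hratio : π (x, y) / σ (x, y) = P y / S y * ((π (x, y) / P y) / (σ (x, y) / S y)) := by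
      field_simp [(hσ (x, y)).ne']
    rw [hratio, lnq_mul hq (div_pos hP hS).le
      (div_pos (div_pos (hπ _) hP) (div_pos (hσ _) hS)).le]
    ring
  rw [hmarginal, hconditional, mul_sum]
  simp only [qRelEntropy, Fintype.sum_prod_type, hterm, sum_add_distrib, mul_sum]
  rfl

end

theorem markov_relative_q_entropy_ineq_general {α : Type*} [Fintype α]
    (q : ℝ) (hq2 : q ≤ 2) (hq1 : q ≠ 1)
    (p s : α → ℝ) (r : α → α → ℝ)
    (hp0 : ∀ x, 0 < p x)
    (hs0 : ∀ x, 0 < s x)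
    (hr0 : ∀ x y, 0 < r x y) (hr1 : ∀ x, ∑ y, r x y = 1) :
    (∑ x, p x * lnq q (p x / s x)) ≥
      (∑ y, (∑ x, p x * r x y) * lnq q ((∑ x, p x * r x y) / (∑ x, s x * r x y))) +
      (1 - q) * ∑ x, ∑ y, p x * r x y *
        lnq q ((∑ x', p x' * r x' y) / (∑ x', s x' * r x' y)) *
        lnq q ((p x * r x y / ∑ x', p x' * r x' y) /
               (s x * r x y / ∑ x', s x' * r x' y)) := by
  rcases isEmpty_or_nonempty α with _ | _
  · simp
  have hP : ∀ y, 0 < ∑ x, p x * r x y := fun y =>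
    sum_pos (fun x _ => mul_pos (hp0 x) (hr0 x y)) univ_nonempty
  have hS : ∀ y, 0 < ∑ x, s x * r x y := fun y =>
    sum_pos (fun x _ => mul_pos (hs0 x) (hr0 x y)) univ_nonempty
  have hjoint := qRelEntropy_eq_marginal_add_conditional hq1
    (π := fun z : α × α => p z.1 * r z.1 z.2) (σ := fun z => s z.1 * r z.1 z.2)
    (fun _ => mul_pos (hp0 _) (hr0 _ _)) (fun _ => mul_pos (hs0 _) (hr0 _ _))
  rw [qRelEntropy_mul_kernel p s hr1] at hjoint
  have hconditional_nonneg : 0 ≤ ∑ y, (∑ x, p x * r x y) *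
      qRelEntropy q (fun x => p x * r x y / ∑ x', p x' * r x' y)
        (fun x => s x * r x y / ∑ x', s x' * r x' y) := by
    refine sum_nonneg fun y _ => mul_nonneg (hP y).le (qRelEntropy_nonneg hq2 hq1
      (fun x => div_pos (mul_pos (hp0 x) (hr0 x y)) (hP y))
      (fun x => div_pos (mul_pos (hs0 x) (hr0 x y)) (hS y)) ?_)
    rw [← sum_div, ← sum_div, div_self (hP y).ne', div_self (hS y).ne']
  dsimp only at hjoint
  change qRelEntropy q p s ≥
    qRelEntropy q (fun y => ∑ x, p x * r x y) (fun y => ∑ x, s x * r x y) + _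
  linarith

theorem markov_relative_q_entropy_ineq {α : Type*} [Fintype α]
    (q : ℝ) (hq2 : q ≤ 2) (hq1 : q ≠ 1)
    (p s : α → ℝ) (r : α → α → ℝ)
    (hp0 : ∀ x, 0 < p x) (hp1 : ∑ x, p x = 1)
    (hs0 : ∀ x, 0 < s x) (hs1 : ∑ x, s x = 1)
    (hr0 : ∀ x y, 0 < r x y) (hr1 : ∀ x, ∑ y, r x y = 1) :
    (∑ x, p x * lnq q (p x / s x)) ≥
      (∑ y, (∑ x, p x * r x y) * lnq q ((∑ x, p x * r x y) / (∑ x, s x * r x y))) +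
      (1 - q) * ∑ x, ∑ y, p x * r x y *
        lnq q ((∑ x', p x' * r x' y) / (∑ x', s x' * r x' y)) *
        lnq q ((p x * r x y / ∑ x', p x' * r x' y) /
               (s x * r x y / ∑ x', s x' * r x' y)) :=
  markov_relative_q_entropy_ineq_general q hq2 hq1 p s r hp0 hs0 hr0 hr1
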